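/- Fix the bump β. For j ≥ 0, r₁, r₂ > 0 and θ ≠ 0, define I_j(r₁,r₂;θ) = β(r₁+r₂) ∫₀^∞ e^{i 2^{j+1} (r₁ r₂/(r₁+r₂)) s²} · (√2 θ)/(s² + 2θ²) ds. Then there exists a constant C, depending only on β, such that |I_j(r₁,r₂;θ)| ≤ C (1 + 2^j r₁ r₂ θ²)^{−1/2} for all j ≥ 0, all r₁, r₂ > 0, and all θ ≠ 0. -/

import Mathlib

open MeasureTheory Real Set

noncomputable section

lemma exp1 {c : ℝ} (hc : 0 < c) : ∫ t in Ioi (0:ℝ), Real.exp (-(c*t)) = 1/c := by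
  have h := integral_rpow_mul_exp_neg_mul_Ioi (one_pos) hc
  simpa [Real.Gamma_one, Real.rpow_one] using h

lemma rpow_neg_half (x : ℝ) (hx : 0 ≤ x) : x ^ (-(1:ℝ)/2) = (Real.sqrt x)⁻¹ := by
  rw [show (-(1:ℝ)/2) = -(1/2) by ring, Real.rpow_neg hx, Real.sqrt_eq_rpow]

lemma key {lam a : ℝ} (hlam : 0 < lam) (ha : 0 < a) :
    ‖∫ s in Ioi (0:ℝ), Complex.exp (Complex.I * ((lam * s^2 : ℝ) : ℂ)) *
        ((a / (s^2 + a^2) : ℝ) : ℂ)‖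
      ≤ π * (1 + lam * a^2) ^ (-(1:ℝ)/2) := by
  set b : ℝ → ℂ := fun t => (t:ℂ) - Complex.I * lam with hb
  set f : ℝ → ℝ → ℂ := fun s t =>
    Complex.exp (-(b t) * (s:ℂ)^2) * ((a * Real.exp (-(a^2 * t)) : ℝ) : ℂ) with hf
  have hbre : ∀ t : ℝ, (b t).re = t := by intro t; simp [hb]
  have hbim : ∀ t : ℝ, (b t).im = -lam := by intro t; simp [hb]
  have hbabs_t : ∀ t : ℝ, 0 < t → t ≤ ‖b t‖ := by
    intro t ht
    calc t = |(b t).re| := by rw [hbre]; exact (abs_of_pos ht).symm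
    _ ≤ _ := Complex.abs_re_le_norm _
  have hbabs_lam : ∀ t : ℝ, lam ≤ ‖b t‖ := by
    intro t
    calc lam = |(b t).im| := by rw [hbim, abs_neg, abs_of_pos hlam]
    _ ≤ _ := Complex.abs_im_le_norm _
  have hbne : ∀ t : ℝ, 0 < t → b t ≠ 0 := by
    intro t ht h0
    have := hbre t; rw [h0] at this; simp at this; exact ht.ne this
  have hnorm : ∀ s t : ℝ, ‖f s t‖ = a * Real.exp (-((s^2 + a^2) * t)) := by
    intro s t
    have h1 : (-(b t) * (s:ℂ)^2).re = -(t * s^2) := by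
      simp [hb, Complex.mul_re]
      simp [← Complex.ofReal_pow]
    rw [hf]
    simp only [norm_mul, Complex.norm_exp, h1, Complex.norm_real, Real.norm_eq_abs, Real.abs_exp]
    rw [abs_of_nonneg (by positivity), ← mul_assoc, mul_comm (Real.exp _) a, mul_assoc,
      ← Real.exp_add]
    ring_nf
  have hpt : ∀ s : ℝ, ∫ t in Ioi (0:ℝ), f s t
      = Complex.exp (Complex.I * ((lam * s^2 : ℝ) : ℂ)) * ((a / (s^2 + a^2) : ℝ) : ℂ) := by
    intro s
    have hc : (0:ℝ) < s^2 + a^2 := by positivity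
    have hsplit : ∀ t : ℝ, f s t
        = Complex.exp (Complex.I * ((lam * s^2 : ℝ) : ℂ)) *
          ((a * Real.exp (-((s^2+a^2) * t)) : ℝ) : ℂ) := by
      intro t
      rw [hf, hb]
      push_cast
      rw [mul_left_comm, ← Complex.exp_add, mul_left_comm, ← Complex.exp_add]
      congr 2
      ring
    rw [setIntegral_congr_fun measurableSet_Ioi (fun t _ => hsplit t),
      MeasureTheory.integral_const_mul]
    congr 1
    refine (integral_ofReal).trans ?_
    congr 1
    show (∫ x in Ioi (0:ℝ), a * rexp (-((s^2+a^2)*x))) = a/(s^2+a^2)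
    rw [MeasureTheory.integral_const_mul, exp1 hc]
    rw [mul_one_div]
  have hcont : Continuous (Function.uncurry f) := by
    rw [hf]; fun_prop
  have hint : Integrable (Function.uncurry f)
      ((volume.restrict (Ioi (0:ℝ))).prod (volume.restrict (Ioi (0:ℝ)))) := by
    refine (integrable_prod_iff hcont.aestronglyMeasurable).2 ⟨?_, ?_⟩
    · refine ae_of_all _ fun s => ?_
      have hc : (0:ℝ) < s^2 + a^2 := by positivity
      have hg : Integrable (fun t => a * Real.exp (-((s^2+a^2)*t)))
          (volume.restrict (Ioi 0)) := by
        simpa only [neg_mul] using (exp_neg_integrableOn_Ioi 0 hc).const_mul a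
      exact hg.mono' (Continuous.aestronglyMeasurable (by rw [hf]; fun_prop))
        (ae_of_all _ fun t => le_of_eq (hnorm s t))
    · have heq : (fun s => ∫ t in Ioi (0:ℝ), ‖f s t‖) = fun s => a * (1/(s^2+a^2)) := by
        funext s
        have hc : (0:ℝ) < s^2 + a^2 := by positivity
        rw [setIntegral_congr_fun measurableSet_Ioi (fun t _ => hnorm s t),
          MeasureTheory.integral_const_mul, exp1 hc]
      have : (fun s => ∫ t in Ioi (0:ℝ), ‖Function.uncurry f (s, t)‖)
          = fun s => a * (1/(s^2+a^2)) := heq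
      rw [this]
      refine Integrable.mono'
        ((integrable_inv_one_add_sq.const_mul (a + 1/a)).restrict (s := Ioi 0)) ?_ ?_
      · refine Continuous.aestronglyMeasurable ?_
        have : ∀ s : ℝ, s^2 + a^2 ≠ 0 := fun s => by positivity
        fun_prop (disch := assumption)
      · refine ae_of_all _ fun s => ?_
        have h1 : (0:ℝ) < s^2+a^2 := by positivity
        have h2 : (0:ℝ) < 1+s^2 := by positivity
        rw [Real.norm_eq_abs, abs_of_nonneg (by positivity), mul_one_div,
          ← div_eq_mul_inv, div_le_div_iff₀ h1 h2]
        have e1 : (1/a) * a^2 = a := by rw [sq]; field_simp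
        nlinarith [mul_nonneg (one_div_nonneg.2 ha.le) (sq_nonneg s), pow_pos ha 3]
  have hswap : (∫ s in Ioi (0:ℝ), Complex.exp (Complex.I * ((lam * s^2 : ℝ) : ℂ)) *
        ((a / (s^2 + a^2) : ℝ) : ℂ))
      = ∫ t in Ioi (0:ℝ), ∫ s in Ioi (0:ℝ), f s t := by
    rw [setIntegral_congr_fun measurableSet_Ioi (fun s (_ : s ∈ Ioi 0) => (hpt s).symm)]
    exact integral_integral_swap hint
  have hgauss : ∀ t ∈ Ioi (0:ℝ), (∫ s in Ioi (0:ℝ), f s t)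
      = ((π:ℂ)/(b t)) ^ (1/2 : ℂ) / 2 * ((a * Real.exp (-(a^2*t)) : ℝ):ℂ) := by
    intro t ht
    rw [hf]
    rw [MeasureTheory.integral_mul_const,
      integral_gaussian_complex_Ioi (show 0 < (b t).re from by rw [hbre]; exact ht)]
  rw [hswap, setIntegral_congr_fun measurableSet_Ioi hgauss]
  have hgnorm : ∀ t:ℝ, 0 < t →
      ‖((π:ℂ)/(b t)) ^ (1/2 : ℂ) / 2 * ((a * Real.exp (-(a^2*t)) : ℝ):ℂ)‖
      = Real.sqrt π / Real.sqrt (‖b t‖) / 2 * (a * Real.exp (-(a^2*t))) := by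
    intro t ht
    have hcpow : ‖((π:ℂ)/(b t)) ^ (1/2 : ℂ)‖
        = Real.sqrt π / Real.sqrt (‖b t‖) := by
      rw [Complex.norm_cpow_of_ne_zero
        (div_ne_zero (by simp [Real.pi_ne_zero]) (hbne t ht))]
      have h2 : ((1:ℂ)/2).re = 1/2 := by norm_num
      have h3 : ((1:ℂ)/2).im = 0 := by norm_num
      rw [h2, h3, mul_zero, Real.exp_zero, div_one, norm_div, Complex.norm_real, Real.norm_eq_abs,
        abs_of_pos pi_pos, Real.div_rpow pi_pos.le (norm_nonneg _),
        ← Real.sqrt_eq_rpow, ← Real.sqrt_eq_rpow]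
    rw [norm_mul, norm_div, hcpow]
    simp only [Complex.norm_real, Real.norm_eq_abs, Complex.norm_two]
    rw [abs_of_nonneg (by positivity)]
  rw [rpow_neg_half _ (by positivity)]
  have ha2 : (0:ℝ) < a^2 := by positivity
  have hs1 : 0 < Real.sqrt (1 + lam*a^2) := Real.sqrt_pos.2 (by positivity)
  have hexpint : Integrable (fun t => a * Real.exp (-(a^2*t))) (volume.restrict (Ioi 0)) := by
    simpa only [neg_mul] using (exp_neg_integrableOn_Ioi 0 ha2).const_mul a
  rcases le_or_gt 1 (lam * a^2) with hcase | hcase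
  · have hb1 : ‖∫ t in Ioi (0:ℝ), ((π:ℂ)/(b t)) ^ (1/2 : ℂ) / 2 * ((a * Real.exp (-(a^2*t)) : ℝ):ℂ)‖
        ≤ ∫ t in Ioi (0:ℝ), Real.sqrt π / Real.sqrt lam / 2 * (a * Real.exp (-(a^2*t))) := by
      refine norm_integral_le_of_norm_le (hexpint.const_mul _) ?_
      refine (ae_restrict_iff' measurableSet_Ioi).2 (ae_of_all _ fun t ht => ?_)
      rw [hgnorm t ht]
      gcongr
      exact hbabs_lam t
    refine hb1.trans ?_
    rw [MeasureTheory.integral_const_mul, MeasureTheory.integral_const_mul, exp1 ha2]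
    have hsl : 0 < Real.sqrt lam := Real.sqrt_pos.2 hlam
    have hle : Real.sqrt (1+lam*a^2) ≤ Real.sqrt 2 * (Real.sqrt lam * a) := by
      rw [show Real.sqrt 2 * (Real.sqrt lam * a) = Real.sqrt (2*(lam*a^2)) by
        rw [Real.sqrt_mul (by norm_num : (0:ℝ) ≤ 2), Real.sqrt_mul hlam.le,
          Real.sqrt_sq ha.le]]
      exact Real.sqrt_le_sqrt (by nlinarith)
    have h1 : Real.sqrt π / Real.sqrt lam / 2 * (a * (1/a^2))
        = Real.sqrt π / (Real.sqrt lam * 2 * a) := by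
      field_simp
    rw [h1, ← div_eq_mul_inv, div_le_div_iff₀ (by positivity) hs1]
    have hnum : Real.sqrt π * Real.sqrt 2 ≤ 2 * π := by
      nlinarith [Real.mul_self_sqrt Real.pi_pos.le, Real.mul_self_sqrt (by norm_num : (0:ℝ) ≤ 2),
        Real.sqrt_nonneg π, Real.sqrt_nonneg 2, Real.pi_gt_three]
    calc Real.sqrt π * Real.sqrt (1+lam*a^2)
        ≤ Real.sqrt π * (Real.sqrt 2 * (Real.sqrt lam * a)) := by
          exact mul_le_mul_of_nonneg_left hle (Real.sqrt_nonneg π)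
      _ ≤ π * (Real.sqrt lam * 2 * a) := by nlinarith [mul_pos hsl ha]
  · have hpow : ∀ t : ℝ, 0 < t → t ^ ((1:ℝ)/2-1) = (Real.sqrt t)⁻¹ := by
      intro t ht
      rw [show (1:ℝ)/2-1 = -(1/2) by norm_num, Real.rpow_neg ht.le, Real.sqrt_eq_rpow]
    have hInt : Integrable
        (fun t => Real.sqrt π/2*a * (t ^ ((1:ℝ)/2-1) * Real.exp (-(a^2*t))))
        (volume.restrict (Ioi 0)) := by
      have h0 := integrableOn_rpow_mul_exp_neg_mul_rpow
        (by norm_num : (-1:ℝ) < 1/2-1) (one_pos : (0:ℝ) < 1) ha2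
      simp only [Real.rpow_one, neg_mul] at h0
      exact h0.const_mul _
    have hb1 : ‖∫ t in Ioi (0:ℝ), ((π:ℂ)/(b t)) ^ (1/2 : ℂ) / 2 * ((a * Real.exp (-(a^2*t)) : ℝ):ℂ)‖
        ≤ ∫ t in Ioi (0:ℝ), Real.sqrt π/2*a * (t ^ ((1:ℝ)/2-1) * Real.exp (-(a^2*t))) := by
      refine norm_integral_le_of_norm_le hInt ?_
      refine (ae_restrict_iff' measurableSet_Ioi).2 (ae_of_all _ fun t ht => ?_)
      rw [hgnorm t ht]
      calc Real.sqrt π / Real.sqrt (‖b t‖) / 2 * (a * Real.exp (-(a^2*t)))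
          ≤ Real.sqrt π / Real.sqrt t / 2 * (a * Real.exp (-(a^2*t))) := by
            gcongr
            · exact Real.sqrt_pos.2 ht
            · exact hbabs_t t ht
        _ = Real.sqrt π/2*a * (t ^ ((1:ℝ)/2-1) * Real.exp (-(a^2*t))) := by
            rw [hpow t ht]; ring
    refine hb1.trans ?_
    rw [MeasureTheory.integral_const_mul, integral_rpow_mul_exp_neg_mul_Ioi one_half_pos ha2]
    have h2 : ((1:ℝ)/a^2) ^ ((1:ℝ)/2) = 1/a := by
      rw [one_div, ← Real.sqrt_eq_rpow, Real.sqrt_inv, Real.sqrt_sq ha.le, one_div]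
    rw [h2, Real.Gamma_one_half_eq]
    have h3 : Real.sqrt π/2*a * (1/a * Real.sqrt π) = π/2 := by
      rw [show Real.sqrt π/2*a * (1/a * Real.sqrt π) = Real.sqrt π*Real.sqrt π/2 * (a/a) by ring,
        Real.mul_self_sqrt Real.pi_pos.le, div_self ha.ne', mul_one]
    rw [h3]
    have h4 : Real.sqrt (1+lam*a^2) ≤ 2 := by
      have h5 : Real.sqrt (1+lam*a^2) ≤ Real.sqrt 4 := Real.sqrt_le_sqrt (by nlinarith)
      rwa [show (4:ℝ) = 2^2 by norm_num, Real.sqrt_sq (by norm_num : (0:ℝ) ≤ 2)] at h5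
    rw [← div_eq_mul_inv]
    exact div_le_div_of_nonneg_left Real.pi_pos.le hs1 h4

/-- The oscillatory integral `I_j(r₁, r₂; θ)`. -/
def Ifun (β : ℝ → ℝ) (j : ℕ) (r₁ r₂ θ : ℝ) : ℂ :=
  ((β (r₁ + r₂) : ℝ) : ℂ) *
    ∫ s in Set.Ioi (0 : ℝ),
      Complex.exp (Complex.I *
        (((2 : ℝ) ^ ((j : ℝ) + 1) * (r₁ * r₂ / (r₁ + r₂)) * s ^ 2 : ℝ) : ℂ)) *
        ((Real.sqrt 2 * θ / (s ^ 2 + 2 * θ ^ 2) : ℝ) : ℂ)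

theorem stmt14 (β : ℝ → ℝ) (hβ : ContDiff ℝ (⊤ : ℕ∞) β)
    (hβs : Function.support β ⊆ Set.Icc (3 / 8) (4 / 3)) :
    ∃ C : ℝ, ∀ (j : ℕ) (r₁ r₂ θ : ℝ), 0 < r₁ → 0 < r₂ → θ ≠ 0 →
      ‖Ifun β j r₁ r₂ θ‖ ≤
        C * (1 + (2 : ℝ) ^ (j : ℝ) * r₁ * r₂ * θ ^ 2) ^ (-(1 : ℝ) / 2) := by
  obtain ⟨M, hM⟩ := hβ.continuous.bounded_above_of_compact_support
    (HasCompactSupport.intro isCompact_Icc fun x hx => by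
      by_contra h
      exact hx (hβs (Function.mem_support.2 h)))
  have hM0 : 0 ≤ M := le_trans (norm_nonneg (β 0)) (hM 0)
  refine ⟨M * π, fun j r₁ r₂ θ h1 h2 hθ => ?_⟩
  have hXpos : (0:ℝ) < 1 + (2:ℝ)^((j:ℝ)) * r₁ * r₂ * θ^2 := by positivity
  by_cases hb0 : β (r₁ + r₂) = 0
  · rw [Ifun, hb0]
    simp only [Complex.ofReal_zero, zero_mul, norm_zero]
    exact mul_nonneg (mul_nonneg hM0 Real.pi_pos.le) (Real.rpow_nonneg hXpos.le _)
  · have hsum := hβs (Function.mem_support.2 hb0)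
    have hrs : 0 < r₁ + r₂ := by linarith [h1, h2]
    rw [Ifun, norm_mul, Complex.norm_real]
    set lam : ℝ := (2:ℝ)^((j:ℝ)+1) * (r₁*r₂/(r₁+r₂)) with hlamdef
    have hlam : 0 < lam :=
      mul_pos (Real.rpow_pos_of_pos two_pos _) (div_pos (mul_pos h1 h2) hrs)
    set a : ℝ := Real.sqrt 2 * |θ| with hadef
    have ha : 0 < a := mul_pos (Real.sqrt_pos.2 two_pos) (abs_pos.2 hθ)
    have ha2 : a^2 = 2*θ^2 := by
      rw [hadef, mul_pow, sq_abs, Real.sq_sqrt (by norm_num : (0:ℝ) ≤ 2)]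
    have hib : ‖∫ s in Ioi (0:ℝ), Complex.exp (Complex.I * ((lam * s^2 : ℝ) : ℂ)) *
          ((Real.sqrt 2 * θ / (s^2 + 2*θ^2) : ℝ) : ℂ)‖
        ≤ π * (1 + lam * a^2) ^ (-(1:ℝ)/2) := by
      rcases hθ.lt_or_gt with hneg | hpos
      · have he : ∀ s : ℝ, Complex.exp (Complex.I * ((lam * s^2 : ℝ) : ℂ)) *
            ((Real.sqrt 2 * θ / (s^2 + 2*θ^2) : ℝ) : ℂ)
            = -(Complex.exp (Complex.I * ((lam * s^2 : ℝ) : ℂ)) *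
              ((a / (s^2 + a^2) : ℝ) : ℂ)) := by
          intro s
          have h' : (Real.sqrt 2 * θ / (s^2+2*θ^2) : ℝ) = -(a/(s^2+a^2)) := by
            rw [ha2, hadef, abs_of_neg hneg]; ring
          rw [h', Complex.ofReal_neg, mul_neg]
        rw [setIntegral_congr_fun measurableSet_Ioi (fun s _ => he s), integral_neg, norm_neg]
        exact key hlam ha
      · have he : ∀ s : ℝ, ((Real.sqrt 2 * θ / (s^2 + 2*θ^2) : ℝ) : ℂ)
            = ((a / (s^2 + a^2) : ℝ) : ℂ) := by
          intro s
          congr 1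
          rw [ha2, hadef, abs_of_pos hpos]
        rw [setIntegral_congr_fun measurableSet_Ioi
          (fun s (_ : s ∈ Ioi (0:ℝ)) => by rw [he s])]
        exact key hlam ha
    have hXle : (2:ℝ)^((j:ℝ)) * r₁ * r₂ * θ^2 ≤ lam * a^2 := by
      rw [hlamdef, ha2, show (2:ℝ)^((j:ℝ)+1) = (2:ℝ)^((j:ℝ)) * 2 from by
        rw [Real.rpow_add two_pos, Real.rpow_one]]
      have h43 : r₁ + r₂ ≤ 4/3 := hsum.2
      have key2 : r₁*r₂ ≤ 4 * (r₁*r₂/(r₁+r₂)) := by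
        rw [← mul_div_assoc, le_div_iff₀ hrs]
        nlinarith [mul_pos h1 h2]
      have hP : (0:ℝ) < (2:ℝ)^((j:ℝ)) := Real.rpow_pos_of_pos two_pos _
      nlinarith [sq_nonneg θ, mul_pos h1 h2, hP, key2,
        mul_nonneg hP.le (sq_nonneg θ), mul_le_mul_of_nonneg_left key2
          (mul_nonneg hP.le (sq_nonneg θ))]
    have hmono : (1 + lam*a^2) ^ (-(1:ℝ)/2)
        ≤ (1 + (2:ℝ)^((j:ℝ))*r₁*r₂*θ^2) ^ (-(1:ℝ)/2) :=
      Real.rpow_le_rpow_of_nonpos hXpos (by linarith) (by norm_num)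
    calc ‖β (r₁+r₂)‖ * ‖∫ s in Ioi (0:ℝ), Complex.exp (Complex.I * ((lam * s^2 : ℝ) : ℂ)) *
          ((Real.sqrt 2 * θ / (s^2 + 2*θ^2) : ℝ) : ℂ)‖
        ≤ M * (π * (1 + lam * a^2) ^ (-(1:ℝ)/2)) :=
          mul_le_mul (hM _) hib (norm_nonneg _) hM0
      _ ≤ M * (π * (1 + (2:ℝ)^((j:ℝ))*r₁*r₂*θ^2) ^ (-(1:ℝ)/2)) :=
          mul_le_mul_of_nonneg_left (mul_le_mul_of_nonneg_left hmono Real.pi_pos.le) hM0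
      _ = M * π * (1 + (2:ℝ)^((j:ℝ))*r₁*r₂*θ^2) ^ (-(1:ℝ)/2) := by ring

end
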